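/- Let M = (M_k)_{k≥0} be a positive logarithmically convex sequence with M_0 = 1 ≤ M_1. Let L ⊆ ℝᵐ be compact, let p : W → ℝⁿ be a C^∞-map on an open set W ⊇ L, let K ⊇ p(L), and let f be C^∞ on an open set containing K. Suppose there are C, ρ, D, σ > 0 such that ‖f^{(j)}(y)‖_{L^j(ℝⁿ,ℝ)} ≤ C ρ^j j! M_j for all y ∈ K and j ∈ ℕ, and ‖p^{(j)}(x)‖_{L^j(ℝᵐ,ℝⁿ)} ≤ D σ^j j! M_j for all x ∈ L and j ∈ ℕ. Then for all k ≥ 1 and all x ∈ L, ‖(f ∘ p)^{(k)}(x)‖_{L^k(ℝᵐ,ℝ)} ≤ C D ρ (M_1 σ)^k (1 + Dρ)^{k−1} k! M_k. In particular there is τ > 0 with ‖f ∘ p‖^M_{L,τ} < ∞. -/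

import Mathlib

open Filter Metric Set Asymptotics
open scoped BigOperators Topology NNReal

noncomputable section

/-- ℝⁿ with the Euclidean norm. -/
abbrev Euc (n : ℕ) := EuclideanSpace ℝ (Fin n)

/-- First-order partial derivative in the `i`-th coordinate direction. -/
def pder {n : ℕ} (i : Fin n) (f : Euc n → ℝ) : Euc n → ℝ :=
  fun x => fderiv ℝ f x (EuclideanSpace.single i 1)

/-- The multi-index partial derivative `∂^α f`. -/
def pderM {n : ℕ} (α : Fin n → ℕ) (f : Euc n → ℝ) : Euc n → ℝ :=
  (List.finRange n).foldr (fun i g => (pder i)^[α i] g) f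

/-- `|α| = ∑ i, α i`. -/
def mdeg {n : ℕ} (α : Fin n → ℕ) : ℕ := ∑ i, α i

/-- `‖f‖^M_{K,ρ} ≤ C`, spelled out:
`|∂^α f(x)| ≤ C ρ^{|α|} |α|! M_{|α|}` for all `x ∈ K` and multi-indices `α`. -/
def DCBound {n : ℕ} (M : ℕ → ℝ) (f : Euc n → ℝ) (K : Set (Euc n)) (ρ C : ℝ) : Prop :=
  ∀ x ∈ K, ∀ α : Fin n → ℕ,
    |pderM α f x| ≤ C * ρ ^ mdeg α * (mdeg α).factorial * M (mdeg α)

/-- `‖f‖^M_{K,ρ} < ∞`. -/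
def DCFinite {n : ℕ} (M : ℕ → ℝ) (f : Euc n → ℝ) (K : Set (Euc n)) (ρ : ℝ) : Prop :=
  ∃ C : ℝ, DCBound M f K ρ C

/-- The Denjoy–Carleman class of Roumieu type `E^{M}(U)`. -/
def Roumieu {n : ℕ} (M : ℕ → ℝ) (U : Set (Euc n)) (f : Euc n → ℝ) : Prop :=
  ContDiffOn ℝ (⊤ : ℕ∞) f U ∧
  ∀ K : Set (Euc n), K ⊆ U → IsCompact K → ∃ ρ > 0, DCFinite M f K ρ

/-- The Denjoy–Carleman class of Beurling type `E^{(M)}(U)`. -/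
def Beurling {n : ℕ} (M : ℕ → ℝ) (U : Set (Euc n)) (f : Euc n → ℝ) : Prop :=
  ContDiffOn ℝ (⊤ : ℕ∞) f U ∧
  ∀ K : Set (Euc n), K ⊆ U → IsCompact K → ∀ ρ > 0, DCFinite M f K ρ

/-- A regular weight sequence. -/
def RegularWeightSeq (M : ℕ → ℝ) : Prop :=
  (∀ k, 0 < M k) ∧
  (∀ k : ℕ, 1 ≤ k → (M k) ^ 2 ≤ M (k - 1) * M (k + 1)) ∧
  M 0 = 1 ∧ 1 ≤ M 1 ∧
  Tendsto (fun k : ℕ => (M k) ^ ((k : ℝ)⁻¹)) atTop atTop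

/-- Quasianalyticity of a weight sequence: `∑ M_k/((k+1) M_{k+1}) = ∞`. -/
def QAseq (M : ℕ → ℝ) : Prop :=
  ¬ Summable (fun k : ℕ => M k / ((k + 1) * M (k + 1)))

/-- `p : V → ℝⁿ` is an `E^{M}`-plot (Roumieu type): `V` is open and all
component functions of `p` belong to `E^{M}(V)`. -/
def RoumieuPlot {m n : ℕ} (M : ℕ → ℝ) (V : Set (Euc m)) (p : Euc m → Euc n) : Prop :=
  IsOpen V ∧ ∀ j : Fin n, Roumieu M V (fun x => p x j)

/-- `p : V → ℝⁿ` is an `E^{(M)}`-plot (Beurling type). -/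
def BeurlingPlot {m n : ℕ} (M : ℕ → ℝ) (V : Set (Euc m)) (p : Euc m → Euc n) : Prop :=
  IsOpen V ∧ ∀ j : Fin n, Beurling M V (fun x => p x j)

/-- `φ(t) = ω(e^t)`. -/
def youngPhi (ω : ℝ → ℝ) (t : ℝ) : ℝ := ω (Real.exp t)

/-- The Young conjugate `φ*(t) = sup_{s ≥ 0} (st - φ(s))`. -/
def youngStar (ω : ℝ → ℝ) (t : ℝ) : ℝ := ⨆ s : Ici (0 : ℝ), ((s : ℝ) * t - youngPhi ω s)

/-- A weight function in the sense of Braun–Meise–Taylor. -/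
def WeightFunction (ω : ℝ → ℝ) : Prop :=
  ContinuousOn ω (Ici 0) ∧ MonotoneOn ω (Ici 0) ∧ ω 0 = 0 ∧
  Tendsto ω atTop atTop ∧
  ((fun t => ω (2 * t)) =O[atTop] ω) ∧
  (ω =O[atTop] fun t => t) ∧
  (Real.log =o[atTop] ω) ∧
  ConvexOn ℝ univ (youngPhi ω)

/-- Quasianalyticity of a weight function: `∫_0^∞ ω(t)/(1+t²) dt = ∞`. -/
def QAweight (ω : ℝ → ℝ) : Prop :=
  ¬ MeasureTheory.IntegrableOn (fun t => ω t / (1 + t ^ 2)) (Ioi 0)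

/-- `‖f‖^ω_{K,ρ} ≤ C`. -/
def OmBound {n : ℕ} (ω : ℝ → ℝ) (f : Euc n → ℝ) (K : Set (Euc n)) (ρ C : ℝ) : Prop :=
  ∀ x ∈ K, ∀ α : Fin n → ℕ,
    |pderM α f x| ≤ C * Real.exp ((1 / ρ) * youngStar ω (ρ * (mdeg α : ℝ)))

/-- `‖f‖^ω_{K,ρ} < ∞`. -/
def OmFinite {n : ℕ} (ω : ℝ → ℝ) (f : Euc n → ℝ) (K : Set (Euc n)) (ρ : ℝ) : Prop :=
  ∃ C : ℝ, OmBound ω f K ρ C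

/-- The Braun–Meise–Taylor class of Roumieu type `E^{ω}(U)`. -/
def RoumieuW {n : ℕ} (ω : ℝ → ℝ) (U : Set (Euc n)) (f : Euc n → ℝ) : Prop :=
  ContDiffOn ℝ (⊤ : ℕ∞) f U ∧
  ∀ K : Set (Euc n), K ⊆ U → IsCompact K → ∃ ρ > 0, OmFinite ω f K ρ

/-- The Braun–Meise–Taylor class of Beurling type `E^{(ω)}(U)`. -/
def BeurlingW {n : ℕ} (ω : ℝ → ℝ) (U : Set (Euc n)) (f : Euc n → ℝ) : Prop :=
  ContDiffOn ℝ (⊤ : ℕ∞) f U ∧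
  ∀ K : Set (Euc n), K ⊆ U → IsCompact K → ∀ ρ > 0, OmFinite ω f K ρ

/-- An `E^{ω}`-plot (Roumieu type). -/
def RoumieuWPlot {m n : ℕ} (ω : ℝ → ℝ) (V : Set (Euc m)) (p : Euc m → Euc n) : Prop :=
  IsOpen V ∧ ∀ j : Fin n, RoumieuW ω V (fun x => p x j)

/-- An `E^{(ω)}`-plot (Beurling type). -/
def BeurlingWPlot {m n : ℕ} (ω : ℝ → ℝ) (V : Set (Euc m)) (p : Euc m → Euc n) : Prop :=
  IsOpen V ∧ ∀ j : Fin n, BeurlingW ω V (fun x => p x j)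

/-- `|K| = sup_{x ∈ K} |x|`. -/
def supNorm {n : ℕ} (K : Set (Euc n)) : ℝ := ⨆ x : K, ‖(x : Euc n)‖

/-- The class `E^{M}(ℝ)` for functions of one real variable. -/
def Roumieu1 (M : ℕ → ℝ) (g : ℝ → ℝ) : Prop :=
  ContDiff ℝ (⊤ : ℕ∞) g ∧
  ∀ K : Set ℝ, IsCompact K → ∃ ρ > 0, ∃ C : ℝ, ∀ t ∈ K, ∀ k : ℕ,
    |iteratedDeriv k g t| ≤ C * ρ ^ k * k.factorial * M k

/-- The class `A_m^{M}(U)`: smooth functions on `U` which are of class `E^{M}`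
along every `m`-dimensional `E^{M}`-plot in `U`. -/
def AClass {n : ℕ} (M : ℕ → ℝ) (m : ℕ) (U : Set (Euc n)) (f : Euc n → ℝ) : Prop :=
  ContDiffOn ℝ (⊤ : ℕ∞) f U ∧
  ∀ (V : Set (Euc m)) (p : Euc m → Euc n), IsOpen V → MapsTo p V U →
    (∀ j : Fin n, Roumieu M V (fun x => p x j)) → Roumieu M V (f ∘ p)

end

set_option linter.unusedSectionVars false

noncomputable section FaaAux


/-- The combinatorial weight of an ordered finpartition. -/
def ofpW {k : ℕ} (c : OrderedFinpartition k) : ℕ :=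
  c.length.factorial * ∏ i, (c.partSize i).factorial

lemma ofp_sum_partSize {k : ℕ} (c : OrderedFinpartition k) :
    ∑ i, c.partSize i = k := by
  have := c.sum_sigma_eq_sum (fun _ => (1 : ℕ))
  simpa using this

lemma ofpW_extendLeft {k : ℕ} (c : OrderedFinpartition k) :
    ofpW c.extendLeft = (c.length + 1) * ofpW c := by
  unfold ofpW OrderedFinpartition.extendLeft
  rw [Fin.prod_univ_succ]
  simp [Nat.factorial_succ]
  ring

lemma ofpW_extendMiddle {k : ℕ} (c : OrderedFinpartition k) (i : Fin c.length) :
    ofpW (c.extendMiddle i) = (c.partSize i + 1) * ofpW c := by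
  unfold ofpW
  have h1 : ∏ j, ((Function.update c.partSize i (c.partSize i + 1)) j).factorial
      = (c.partSize i + 1).factorial * ∏ j ∈ Finset.univ.erase i, (c.partSize j).factorial := by
    rw [← Finset.mul_prod_erase Finset.univ _ (Finset.mem_univ i)]
    congr 1
    · simp
    · apply Finset.prod_congr rfl
      intro j hj
      rw [Function.update_of_ne (Finset.ne_of_mem_erase hj)]
  have h2 : ∏ j, (c.partSize j).factorial
      = (c.partSize i).factorial * ∏ j ∈ Finset.univ.erase i, (c.partSize j).factorial :=
    (Finset.mul_prod_erase Finset.univ _ (Finset.mem_univ i)).symm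
  show c.length.factorial * ∏ j, ((Function.update c.partSize i (c.partSize i + 1)) j).factorial = _
  simp only [OrderedFinpartition.extendMiddle, h1, h2, Nat.factorial_succ]
  ring

/-- fiberwise sums of the weight. -/
def myF (k j : ℕ) : ℕ :=
  ∑ c : OrderedFinpartition k, if c.length = j then ofpW c else 0

lemma myF_zero (j : ℕ) : myF 0 j = if 0 = j then 1 else 0 := by
  rw [myF, Fintype.sum_unique]
  have hd : (default : OrderedFinpartition 0) = OrderedFinpartition.atomic 0 := rfl
  rw [hd]
  simp [ofpW, OrderedFinpartition.atomic]

lemma myF_succ (k j : ℕ) : myF (k + 1) j = j * myF k (j - 1) + (k + j) * myF k j := by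
  classical
  rw [myF, ← (OrderedFinpartition.extendEquiv k).sum_comp
    (fun c => if c.length = j then ofpW c else 0)]
  rw [← Finset.univ_sigma_univ, Finset.sum_sigma]
  have hterm : ∀ c : OrderedFinpartition k,
      ∑ o : Option (Fin c.length),
        (if ((OrderedFinpartition.extendEquiv k) ⟨c, o⟩).length = j
          then ofpW ((OrderedFinpartition.extendEquiv k) ⟨c, o⟩) else 0)
      = (j * if c.length = j - 1 then ofpW c else 0)
        + ((k + j) * if c.length = j then ofpW c else 0) := by
    intro c
    rw [Fintype.sum_option]
    have hL : ((OrderedFinpartition.extendEquiv k) ⟨c, none⟩) = c.extendLeft := rfl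
    have hM : ∀ i, ((OrderedFinpartition.extendEquiv k) ⟨c, some i⟩) = c.extendMiddle i :=
      fun i => rfl
    have hlenL : c.extendLeft.length = c.length + 1 := rfl
    have hlenM : ∀ i, (c.extendMiddle i).length = c.length := fun i => rfl
    simp only [hL, hM, hlenL, hlenM, ofpW_extendLeft, ofpW_extendMiddle]
    have hsum : ∑ i : Fin c.length, (if c.length = j then (c.partSize i + 1) * ofpW c else 0)
        = (if c.length = j then (k + c.length) * ofpW c else 0) := by
      by_cases h : c.length = j
      · simp only [h, if_true]
        rw [← Finset.sum_mul, ← h]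
        congr 1
        rw [Finset.sum_add_distrib, ofp_sum_partSize]
        simp [add_comm]
      · simp [h]
    rw [hsum]
    clear hsum
    by_cases h : c.length + 1 = j
    · have h' : c.length = j - 1 := by omega
      have h'' : c.length ≠ j := by omega
      subst h
      simp [Nat.add_sub_cancel, h'']
    · by_cases h2 : c.length = j
      · by_cases h3 : c.length = j - 1
        · have hj0 : j = 0 := by omega
          simp [h, h2, h3, hj0]
        · simp [h, h2, h3]
          intro h4
          exact Or.inl (by omega)
      · by_cases h3 : c.length = j - 1
        · have hj0 : j = 0 := by omega
          simp [h, h2, h3, hj0]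
        · simp [h, h2, h3]
  rw [Finset.sum_congr rfl (fun c _ => hterm c), Finset.sum_add_distrib,
    ← Finset.mul_sum, ← Finset.mul_sum, myF, myF]



lemma myF_zero' : ∀ k, myF (k + 1) 0 = 0 := by
  intro k
  induction k with
  | zero => rw [myF_succ]; simp [myF_zero]
  | succ k ih => rw [myF_succ, ih]; simp [myF_zero']

lemma myF_closed : ∀ k j, myF (k + 1) (j + 1) = (k + 1).factorial * k.choose j := by
  intro k
  induction k with
  | zero =>
    intro j
    rw [myF_succ]
    cases j with
    | zero => simp [myF_zero]
    | succ j => simp [myF_zero]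
  | succ k ih =>
    intro j
    rw [myF_succ]
    cases j with
    | zero =>
      simp only [show (0:ℕ) + 1 - 1 = 0 from rfl, myF_zero', ih 0, mul_zero, zero_add, one_mul]
      simp [Nat.factorial_succ]
    | succ j =>
      simp only [Nat.add_sub_cancel]
      rw [ih j, ih (j + 1)]
      have hid := Nat.choose_succ_right_eq k j
      -- (k.choose (j+1)) * (j+1) = k.choose j * (k - j)
      rcases le_or_gt j k with hjk | hjk
      · have e1 : (k + 2) * k.choose j = (j + 2) * k.choose j + (k - j) * k.choose j := by
          rw [← Nat.add_mul]
          congr 1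
          omega
        have e2 : k.choose (j + 1) * (j + 1) = k.choose j * (k - j) := hid
        have hc : (k + 1).choose (j + 1) = k.choose j + k.choose (j + 1) :=
          Nat.choose_succ_succ k j
        rw [Nat.factorial_succ (k + 1), hc]
        nlinarith [e1, e2]
      · have c1 : k.choose (j + 1) = 0 := Nat.choose_eq_zero_of_lt (by omega)
        have c2 : k.choose j = 0 := Nat.choose_eq_zero_of_lt (by omega)
        have c3 : (k + 1).choose (j + 1) = 0 := Nat.choose_eq_zero_of_lt (by omega)
        simp [c1, c2, c3]

lemma key_comb (k : ℕ) (hk : 1 ≤ k) (x : ℝ) :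
    ∑ c : OrderedFinpartition k, x ^ c.length * (ofpW c : ℝ)
      = (k.factorial : ℝ) * x * (1 + x) ^ (k - 1) := by
  classical
  have hfib : ∑ c : OrderedFinpartition k, x ^ c.length * (ofpW c : ℝ)
      = ∑ j ∈ Finset.range (k + 1), x ^ j * (myF k j : ℝ) := by
    rw [← Finset.sum_fiberwise_of_maps_to
      (g := fun c : OrderedFinpartition k => c.length)
      (fun c _ => Finset.mem_range.2 (Nat.lt_succ_of_le c.length_le))
      (fun c => x ^ c.length * (ofpW c : ℝ))]
    refine Finset.sum_congr rfl fun j _ => ?_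
    rw [myF, Nat.cast_sum, Finset.mul_sum, Finset.sum_filter]
    refine Finset.sum_congr rfl fun c _ => ?_
    by_cases h : c.length = j <;> simp [h]
  rw [hfib]
  obtain ⟨k', rfl⟩ : ∃ k', k = k' + 1 := ⟨k - 1, by omega⟩
  rw [Finset.sum_range_succ']
  simp only [myF_zero', myF_closed, pow_zero, Nat.cast_zero, mul_zero, add_zero]
  have hbin : (1 + x) ^ k' = ∑ j ∈ Finset.range (k' + 1), x ^ j * (k'.choose j : ℝ) := by
    rw [add_comm, add_pow]
    simp
  simp only [Nat.add_sub_cancel, hbin, Finset.mul_sum, Finset.sum_mul]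
  refine Finset.sum_congr rfl fun j _ => ?_
  push_cast
  ring

section LogCvx

variable {M : ℕ → ℝ} (hpos : ∀ k, 0 < M k) (h0 : M 0 = 1) (h1 : 1 ≤ M 1)
  (hlc : ∀ k : ℕ, 1 ≤ k → (M k) ^ 2 ≤ M (k - 1) * M (k + 1))

include hpos hlc in
lemma ratio_mono : ∀ i j : ℕ, i ≤ j → M (i + 1) * M j ≤ M i * M (j + 1) := by
  have hmono : Monotone (fun t : ℕ => M (t + 1) / M t) := by
    apply monotone_nat_of_le_succ
    intro t
    rw [div_le_div_iff₀ (hpos t) (hpos (t + 1))]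
    have := hlc (t + 1) (by omega)
    simp only [Nat.add_sub_cancel] at this
    nlinarith [this]
  intro i j hij
  have := hmono hij
  rw [div_le_div_iff₀ (hpos i) (hpos j)] at this
  nlinarith [this]

include hpos hlc in
lemma two_term (a b : ℕ) (ha : 1 ≤ a) (hb : 1 ≤ b) :
    M a * M b ≤ M 1 * M (a + b - 1) := by
  induction a, ha using Nat.le_induction with
  | base => simp only [show ∀ b, 1 + b - 1 = b from fun b => by omega, le_refl]
  | succ a ha ih =>
    have h1 : M (a + 1) * M (a + b - 1) ≤ M a * M (a + b) := by
      have := ratio_mono hpos hlc a (a + b - 1) (by omega)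
      have e : a + b - 1 + 1 = a + b := by omega
      rwa [e] at this
    have e2 : a + 1 + b - 1 = a + b := by omega
    rw [e2]
    have hprod := mul_le_mul h1 ih (mul_pos (hpos a) (hpos b)).le
      (mul_pos (hpos a) (hpos (a + b))).le
    have hp1 := hpos a
    have hp2 := hpos (a + b - 1)
    nlinarith [mul_pos (hpos a) (hpos (a + b - 1)), hpos (a+1), hpos b, hpos 1, hpos (a+b),
      mul_pos (hpos 1) (hpos (a+b))]

include hpos h0 h1 hlc in
lemma prod_bound : ∀ (j : ℕ) (s : Fin (j + 1) → ℕ), (∀ i, 1 ≤ s i) →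
    ∏ i, M (s i) ≤ M 1 ^ j * M (∑ i, s i - j) := by
  intro j
  induction j with
  | zero => intro s hs; simp
  | succ j ih =>
    intro s hs
    rw [Fin.prod_univ_succ, Fin.sum_univ_succ]
    have hT : j + 1 ≤ ∑ i, s (Fin.succ i) := by
      calc (j + 1 : ℕ) = ∑ _i : Fin (j + 1), 1 := by simp
      _ ≤ ∑ i, s (Fin.succ i) := Finset.sum_le_sum fun i _ => hs _
    have ihs := ih (fun i => s (Fin.succ i)) (fun i => hs _)
    have h2 : M (s 0) * M (∑ i, s (Fin.succ i) - j) ≤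
        M 1 * M (s 0 + ∑ i, s (Fin.succ i) - (j + 1)) := by
      have := two_term hpos hlc (s 0) (∑ i, s (Fin.succ i) - j) (hs 0) (by omega)
      have e : s 0 + (∑ i, s (Fin.succ i) - j) - 1 = s 0 + ∑ i, s (Fin.succ i) - (j + 1) := by
        omega
      rwa [e] at this
    calc M (s 0) * ∏ i, M (s (Fin.succ i)) ≤ M (s 0) * (M 1 ^ j * M (∑ i, s (Fin.succ i) - j)) :=
          mul_le_mul_of_nonneg_left ihs (hpos _).le
      _ = M 1 ^ j * (M (s 0) * M (∑ i, s (Fin.succ i) - j)) := by ring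
      _ ≤ M 1 ^ j * (M 1 * M (s 0 + ∑ i, s (Fin.succ i) - (j + 1))) :=
          mul_le_mul_of_nonneg_left h2 (by positivity)
      _ = M 1 ^ (j + 1) * M (s 0 + ∑ i, s (Fin.succ i) - (j + 1)) := by ring

include hpos h0 h1 hlc in
lemma part_bound {k : ℕ} (hk : 1 ≤ k) (c : OrderedFinpartition k) :
    M c.length * ∏ i, M (c.partSize i) ≤ M 1 ^ k * M k := by
  obtain ⟨j, hj⟩ : ∃ j, c.length = j + 1 := ⟨c.length - 1, by
    have := c.length_pos (by omega); omega⟩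
  have hsum : ∑ i, c.partSize i = k := by
    have := c.sum_sigma_eq_sum (fun _ => (1 : ℕ)); simpa using this
  have hle : c.length ≤ k := c.length_le
  have hprod : ∏ i, M (c.partSize i) ≤ M 1 ^ j * M (k - j) := by
    have hpb := prod_bound hpos h0 h1 hlc j (fun i => c.partSize (finCongr hj.symm i))
      (fun i => c.partSize_pos _)
    have e1 : ∏ i : Fin (j + 1), M (c.partSize (finCongr hj.symm i))
        = ∏ i, M (c.partSize i) := Fintype.prod_equiv (finCongr hj.symm) _ _ (fun i => rfl)
    have e2 : ∑ i : Fin (j + 1), c.partSize (finCongr hj.symm i)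
        = ∑ i, c.partSize i := Fintype.sum_equiv (finCongr hj.symm) _ _ (fun i => rfl)
    rwa [e1, e2, hsum] at hpb
  have htwo : M (j + 1) * M (k - j) ≤ M 1 * M k := by
    have := two_term hpos hlc (j + 1) (k - j) (by omega) (by omega)
    have e : j + 1 + (k - j) - 1 = k := by omega
    rwa [e] at this
  calc M c.length * ∏ i, M (c.partSize i) ≤ M (j + 1) * (M 1 ^ j * M (k - j)) := by
        rw [show M c.length = M (j + 1) from by rw [hj]]
        exact mul_le_mul_of_nonneg_left hprod (hpos _).le
    _ = M 1 ^ j * (M (j + 1) * M (k - j)) := by ring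
    _ ≤ M 1 ^ j * (M 1 * M k) := mul_le_mul_of_nonneg_left htwo (by positivity)
    _ = M 1 ^ (j + 1) * M k := by ring
    _ ≤ M 1 ^ k * M k := by
        have : M 1 ^ (j + 1) ≤ M 1 ^ k := pow_le_pow_right₀ h1 (by omega)
        exact mul_le_mul_of_nonneg_right this (hpos _).le

end LogCvx


lemma norm_compAlong_le {m n k : ℕ} (c : OrderedFinpartition k)
    (g : ContinuousMultilinearMap ℝ (fun _ : Fin c.length => Euc n) ℝ)
    (q : ∀ i : Fin c.length, ContinuousMultilinearMap ℝ (fun _ : Fin (c.partSize i) => Euc m)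
      (Euc n)) :
    ‖c.compAlongOrderedFinpartition g q‖ ≤ ‖g‖ * ∏ i, ‖q i‖ := by
  apply ContinuousMultilinearMap.opNorm_le_bound (by positivity) (fun v => ?_)
  simp only [OrderedFinpartition.compAlongOrderFinpartition_apply]
  apply (g.le_opNorm _).trans
  rw [mul_assoc, ← c.prod_sigma_eq_prod, ← Finset.prod_mul_distrib]
  gcongr with i _
  exact (q i).le_opNorm _

lemma faa_formula {m n : ℕ}
    (W : Set (Euc m)) (hW : IsOpen W)
    (p : Euc m → Euc n) (hp : ContDiffOn ℝ (⊤ : ℕ∞) p W)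
    (U : Set (Euc n)) (hU : IsOpen U)
    (f : Euc n → ℝ) (hf : ContDiffOn ℝ (⊤ : ℕ∞) f U)
    (x : Euc m) (hxW : x ∈ W) (hxU : p x ∈ U) (k : ℕ) :
    ‖iteratedFDeriv ℝ k (f ∘ p) x‖ ≤
      ∑ c : OrderedFinpartition k,
        ‖iteratedFDeriv ℝ c.length f (p x)‖ * ∏ i, ‖iteratedFDeriv ℝ (c.partSize i) p x‖ := by
  classical
  set V : Set (Euc m) := W ∩ p ⁻¹' U with hV
  have hVopen : IsOpen V := (hp.continuousOn).isOpen_inter_preimage hW hU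
  have hxV : x ∈ V := ⟨hxW, hxU⟩
  have hfT : HasFTaylorSeriesUpToOn (⊤ : ℕ∞) f (ftaylorSeriesWithin ℝ f U) U :=
    hf.ftaylorSeriesWithin hU.uniqueDiffOn
  have hpT : HasFTaylorSeriesUpToOn (⊤ : ℕ∞) p (ftaylorSeriesWithin ℝ p W) V :=
    (hp.ftaylorSeriesWithin hW.uniqueDiffOn).mono inter_subset_left
  have hcomp := hfT.comp hpT (fun y hy => hy.2)
  have hEq : iteratedFDeriv ℝ k (f ∘ p) x
      = (ftaylorSeriesWithin ℝ f U (p x)).taylorComp (ftaylorSeriesWithin ℝ p W x) k := by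
    have h1 := hcomp.eq_iteratedFDerivWithin_of_uniqueDiffOn (m := k) (by exact_mod_cast le_top) hVopen.uniqueDiffOn hxV
    rw [iteratedFDerivWithin_of_isOpen _ hVopen hxV] at h1
    exact h1.symm
  rw [hEq, FormalMultilinearSeries.taylorComp]
  refine (norm_sum_le _ _).trans (Finset.sum_le_sum fun c _ => ?_)
  have hterm : (ftaylorSeriesWithin ℝ f U (p x)).compAlongOrderedFinpartition
      (ftaylorSeriesWithin ℝ p W x) c
      = c.compAlongOrderedFinpartition (ftaylorSeriesWithin ℝ f U (p x) c.length)
        (fun i => ftaylorSeriesWithin ℝ p W x (c.partSize i)) := rfl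
  rw [hterm]
  refine (norm_compAlong_le c _ _).trans ?_
  have e1 : ftaylorSeriesWithin ℝ f U (p x) c.length = iteratedFDeriv ℝ c.length f (p x) := by
    show iteratedFDerivWithin ℝ c.length f U (p x) = _
    exact iteratedFDerivWithin_of_isOpen _ hU hxU
  have e2 : ∀ i : Fin c.length, ftaylorSeriesWithin ℝ p W x (c.partSize i)
      = iteratedFDeriv ℝ (c.partSize i) p x := fun i =>
    iteratedFDerivWithin_of_isOpen _ hW hxW
  rw [e1]
  have e3 : ∏ i, ‖ftaylorSeriesWithin ℝ p W x (c.partSize i)‖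
      = ∏ i, ‖iteratedFDeriv ℝ (c.partSize i) p x‖ :=
    Finset.prod_congr rfl fun i _ => by rw [e2]
  rw [e3]



def pderL {n : ℕ} (l : List (Fin n)) (f : Euc n → ℝ) : Euc n → ℝ :=
  l.foldr pder f

lemma pderL_append {n : ℕ} (l₁ l₂ : List (Fin n)) (f : Euc n → ℝ) :
    pderL (l₁ ++ l₂) f = pderL l₁ (pderL l₂ f) := by
  simp [pderL, List.foldr_append]

lemma iterate_pder_eq {n : ℕ} (i : Fin n) (k : ℕ) (f : Euc n → ℝ) :
    (pder i)^[k] f = pderL (List.replicate k i) f := by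
  induction k with
  | zero => simp [pderL]
  | succ k ih =>
    rw [Function.iterate_succ_apply', ih]
    simp [pderL, List.replicate_succ]

lemma pderM_eq_pderL {n : ℕ} (α : Fin n → ℕ) (f : Euc n → ℝ) :
    pderM α f = pderL ((List.finRange n).flatMap fun i => List.replicate (α i) i) f := by
  rw [pderM]
  generalize (List.finRange n) = l
  induction l with
  | nil => simp [pderL]
  | cons i l ih =>
    rw [List.foldr_cons, ih, List.flatMap_cons, pderL_append, iterate_pder_eq]

lemma flat_length {n : ℕ} (α : Fin n → ℕ) :
    ((List.finRange n).flatMap fun i => List.replicate (α i) i).length = mdeg α := by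
  rw [List.length_flatMap]
  simp only [mdeg, Fin.sum_univ_def]
  congr 1
  apply List.map_congr_left
  intro i _
  simp

lemma pderL_eq_iteratedFDeriv {n : ℕ} {V : Set (Euc n)} (hV : IsOpen V) {g : Euc n → ℝ}
    (hg : ContDiffOn ℝ (⊤ : ℕ∞) g V) (l : List (Fin n)) :
    ∀ x ∈ V, pderL l g x
      = iteratedFDeriv ℝ l.length g x (fun j => EuclideanSpace.single (l.get j) 1) := by
  induction l with
  | nil =>
    intro x hx
    simp [pderL, iteratedFDeriv_zero_apply]
  | cons i l ih =>
    intro x hx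
    have hby : pderL (i :: l) g x = fderiv ℝ (pderL l g) x (EuclideanSpace.single i 1) := rfl
    have hev : pderL l g =ᶠ[𝓝 x]
        fun y => iteratedFDeriv ℝ l.length g y (fun j => EuclideanSpace.single (l.get j) 1) :=
      Filter.eventually_of_mem (hV.mem_nhds hx) (fun y hy => ih y hy)
    have hdiff : DifferentiableAt ℝ (iteratedFDeriv ℝ l.length g) x := by
      have h1 : ContDiffAt ℝ (⊤ : ℕ∞) g x := hg.contDiffAt (hV.mem_nhds hx)
      have h2 : ContDiffAt ℝ 1 (iteratedFDeriv ℝ l.length g) x :=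
        h1.iteratedFDeriv_right (by exact_mod_cast le_top)
      exact h2.differentiableAt one_ne_zero
    have hfd : HasFDerivAt
        (fun y => iteratedFDeriv ℝ l.length g y (fun j => EuclideanSpace.single (l.get j) 1))
        ((fderiv ℝ (iteratedFDeriv ℝ l.length g) x).flipMultilinear
          (fun j => EuclideanSpace.single (l.get j) 1)) x :=
      hdiff.hasFDerivAt.continuousMultilinear_apply_const _
    rw [hby, hev.fderiv_eq, hfd.fderiv]
    simp only [ContinuousLinearMap.flipMultilinear_apply_apply]
    have h2 : (fun j : Fin (l.length + 1) => EuclideanSpace.single ((i :: l).get j) (1:ℝ))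
        = Fin.cons (EuclideanSpace.single i 1) (fun j => EuclideanSpace.single (l.get j) 1) := by
      funext j
      induction j using Fin.cases <;> rfl
    show (fderiv ℝ (iteratedFDeriv ℝ l.length g) x) (EuclideanSpace.single i 1)
        (fun j => EuclideanSpace.single (l.get j) 1)
      = iteratedFDeriv ℝ (l.length + 1) g x
          (fun j => EuclideanSpace.single ((i :: l).get j) 1)
    rw [h2, iteratedFDeriv_succ_apply_left, Fin.cons_zero, Fin.tail_cons]

lemma pderM_le_norm {n : ℕ} {V : Set (Euc n)} (hV : IsOpen V) {g : Euc n → ℝ}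
    (hg : ContDiffOn ℝ (⊤ : ℕ∞) g V) (α : Fin n → ℕ) {x : Euc n} (hx : x ∈ V) :
    |pderM α g x| ≤ ‖iteratedFDeriv ℝ (mdeg α) g x‖ := by
  rw [pderM_eq_pderL, pderL_eq_iteratedFDeriv hV hg _ x hx]
  set l := (List.finRange n).flatMap fun i => List.replicate (α i) i
  calc |iteratedFDeriv ℝ l.length g x (fun j => EuclideanSpace.single (l.get j) 1)|
      ≤ ‖iteratedFDeriv ℝ l.length g x‖ * ∏ j : Fin l.length, ‖EuclideanSpace.single (l.get j) (1:ℝ)‖ :=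
        (iteratedFDeriv ℝ l.length g x).le_opNorm _
    _ = ‖iteratedFDeriv ℝ l.length g x‖ := by
        simp [EuclideanSpace.norm_single]
    _ = ‖iteratedFDeriv ℝ (mdeg α) g x‖ := by rw [flat_length]

lemma pderM_zero {n : ℕ} (α : Fin n → ℕ) (hα : ∀ i, α i = 0) (g : Euc n → ℝ) :
    pderM α g = g := by
  rw [pderM]
  generalize (List.finRange n) = l
  induction l with
  | nil => rfl
  | cons i l ih => rw [List.foldr_cons, hα, Function.iterate_zero, ih]; rfl

end FaaAux

/-- The Faà di Bruno estimate: composition of functions with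
Denjoy–Carleman bounds satisfies a Denjoy–Carleman bound. -/
theorem statement17 (m n : ℕ) (M : ℕ → ℝ) (hpos : ∀ k, 0 < M k)
    (h0 : M 0 = 1) (h1 : 1 ≤ M 1)
    (hlc : ∀ k : ℕ, 1 ≤ k → (M k) ^ 2 ≤ M (k - 1) * M (k + 1))
    (L : Set (Euc m)) (hL : IsCompact L)
    (W : Set (Euc m)) (hW : IsOpen W) (hLW : L ⊆ W)
    (p : Euc m → Euc n) (hp : ContDiffOn ℝ (⊤ : ℕ∞) p W)
    (K : Set (Euc n)) (hpLK : p '' L ⊆ K)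
    (U : Set (Euc n)) (hU : IsOpen U) (hKU : K ⊆ U)
    (f : Euc n → ℝ) (hf : ContDiffOn ℝ (⊤ : ℕ∞) f U)
    (C ρ D σ : ℝ) (hC : 0 < C) (hρ : 0 < ρ) (hD : 0 < D) (hσ : 0 < σ)
    (hfb : ∀ y ∈ K, ∀ j : ℕ, ‖iteratedFDeriv ℝ j f y‖ ≤ C * ρ ^ j * j.factorial * M j)
    (hpb : ∀ x ∈ L, ∀ j : ℕ, ‖iteratedFDeriv ℝ j p x‖ ≤ D * σ ^ j * j.factorial * M j) :
    (∀ k : ℕ, 1 ≤ k → ∀ x ∈ L,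
      ‖iteratedFDeriv ℝ k (f ∘ p) x‖ ≤
        C * D * ρ * (M 1 * σ) ^ k * (1 + D * ρ) ^ (k - 1) * k.factorial * M k) ∧
    ∃ τ > 0, DCFinite M (f ∘ p) L τ := by
  
  have hpxK : ∀ x ∈ L, p x ∈ K := fun x hx => hpLK ⟨x, hx, rfl⟩
  have part1 : ∀ k : ℕ, 1 ≤ k → ∀ x ∈ L,
      ‖iteratedFDeriv ℝ k (f ∘ p) x‖ ≤
        C * D * ρ * (M 1 * σ) ^ k * (1 + D * ρ) ^ (k - 1) * k.factorial * M k := by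
    intro k hk x hx
    have hxW : x ∈ W := hLW hx
    have hxU : p x ∈ U := hKU (hpxK x hx)
    refine (faa_formula W hW p hp U hU f hf x hxW hxU k).trans ?_
    have step1 : ∑ c : OrderedFinpartition k,
        ‖iteratedFDeriv ℝ c.length f (p x)‖ * ∏ i, ‖iteratedFDeriv ℝ (c.partSize i) p x‖
        ≤ ∑ c : OrderedFinpartition k,
          (C * ρ ^ c.length * c.length.factorial * M c.length) *
            ∏ i, (D * σ ^ c.partSize i * (c.partSize i).factorial * M (c.partSize i)) := by
      refine Finset.sum_le_sum fun c _ => ?_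
      have h1 := hfb (p x) (hpxK x hx) c.length
      have h2 : ∏ i, ‖iteratedFDeriv ℝ (c.partSize i) p x‖
          ≤ ∏ i, (D * σ ^ c.partSize i * (c.partSize i).factorial * M (c.partSize i)) :=
        Finset.prod_le_prod (fun i _ => norm_nonneg _) (fun i _ => hpb x hx _)
      exact mul_le_mul h1 h2 (Finset.prod_nonneg fun i _ => norm_nonneg _)
        (le_trans (norm_nonneg _) h1)
    refine step1.trans ?_
    have step2 : ∀ c : OrderedFinpartition k,
        (C * ρ ^ c.length * c.length.factorial * M c.length) *
          ∏ i, (D * σ ^ c.partSize i * (c.partSize i).factorial * M (c.partSize i))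
        ≤ (C * σ ^ k * (M 1 ^ k * M k)) * ((D * ρ) ^ c.length * (ofpW c : ℝ)) := by
      intro c
      have hprodsplit : ∏ i, (D * σ ^ c.partSize i * (c.partSize i).factorial * M (c.partSize i))
          = D ^ c.length * σ ^ k * (∏ i, ((c.partSize i).factorial : ℝ)) *
            ∏ i, M (c.partSize i) := by
        rw [Finset.prod_mul_distrib, Finset.prod_mul_distrib, Finset.prod_mul_distrib,
          Finset.prod_const, Finset.prod_pow_eq_pow_sum, ofp_sum_partSize]
        simp [Finset.card_univ]
      have heq : (C * ρ ^ c.length * c.length.factorial * M c.length) *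
          ∏ i, (D * σ ^ c.partSize i * (c.partSize i).factorial * M (c.partSize i))
          = (C * σ ^ k * ((D * ρ) ^ c.length * (ofpW c : ℝ))) *
            (M c.length * ∏ i, M (c.partSize i)) := by
        rw [hprodsplit, ofpW]
        push_cast
        ring
      rw [heq]
      have hpart := part_bound hpos h0 h1 hlc hk c
      have hnn : (0:ℝ) ≤ C * σ ^ k * ((D * ρ) ^ c.length * (ofpW c : ℝ)) := by
        apply mul_nonneg (mul_nonneg hC.le (pow_nonneg hσ.le _))
        exact mul_nonneg (pow_nonneg (mul_nonneg hD.le hρ.le) _) (Nat.cast_nonneg _)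
      calc (C * σ ^ k * ((D * ρ) ^ c.length * (ofpW c : ℝ))) *
            (M c.length * ∏ i, M (c.partSize i))
          ≤ (C * σ ^ k * ((D * ρ) ^ c.length * (ofpW c : ℝ))) * (M 1 ^ k * M k) :=
            mul_le_mul_of_nonneg_left hpart hnn
        _ = (C * σ ^ k * (M 1 ^ k * M k)) * ((D * ρ) ^ c.length * (ofpW c : ℝ)) := by ring
    refine (Finset.sum_le_sum fun c _ => step2 c).trans ?_
    rw [← Finset.mul_sum, key_comb k hk (D * ρ)]
    ring_nf
    apply le_of_eq
    ring
  refine ⟨part1, M 1 * σ * (1 + D * ρ), mul_pos (mul_pos (hpos 1) hσ) (by nlinarith), C * (1 + D * ρ), ?_⟩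
  intro x hx α
  have hxW : x ∈ W := hLW hx
  have hxU : p x ∈ U := hKU (hpxK x hx)
  set V : Set (Euc m) := W ∩ p ⁻¹' U with hVdef
  have hVopen : IsOpen V := (hp.continuousOn).isOpen_inter_preimage hW hU
  have hxV : x ∈ V := ⟨hxW, hxU⟩
  have hg : ContDiffOn ℝ (⊤ : ℕ∞) (f ∘ p) V :=
    hf.comp (hp.mono inter_subset_left) (fun y hy => hy.2)
  rcases Nat.eq_zero_or_pos (mdeg α) with hm0 | hmpos
  · have hαz : ∀ i, α i = 0 := by
      intro i
      have := Finset.sum_eq_zero_iff_of_nonneg (fun j _ => Nat.zero_le (α j)) |>.1 hm0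
      exact this i (Finset.mem_univ i)
    rw [pderM_zero α hαz, hm0]
    have h1' := hfb (p x) (hpxK x hx) 0
    rw [norm_iteratedFDeriv_zero] at h1'
    have : |(f ∘ p) x| ≤ C := by
      simpa [h0, Real.norm_eq_abs] using h1'
    have hDρ : 0 < D * ρ := mul_pos hD hρ
    simp only [pow_zero, Nat.factorial_zero, Nat.cast_one, h0]
    nlinarith
  · set k := mdeg α with hkdef
    have hk : 1 ≤ k := hmpos
    have hb1 : |pderM α (f ∘ p) x| ≤ ‖iteratedFDeriv ℝ k (f ∘ p) x‖ :=
      pderM_le_norm hVopen hg α hxV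
    refine hb1.trans ((part1 k hk x hx).trans ?_)
    have hkey : C * D * ρ * (M 1 * σ) ^ k * (1 + D * ρ) ^ (k - 1)
        ≤ (C * (1 + D * ρ)) * (M 1 * σ * (1 + D * ρ)) ^ k := by
      have hb : (0:ℝ) ≤ 1 + D * ρ := by nlinarith
      have hMσ : (0:ℝ) ≤ (M 1 * σ) ^ k := pow_nonneg (mul_nonneg (hpos 1).le hσ.le) _
      have h1' : D * ρ ≤ 1 + D * ρ := by linarith
      have h2' : (1 + D * ρ) ^ (k - 1) ≤ (1 + D * ρ) ^ k :=
        pow_le_pow_right₀ (by nlinarith) (by omega)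
      calc C * D * ρ * (M 1 * σ) ^ k * (1 + D * ρ) ^ (k - 1)
          = (C * (M 1 * σ) ^ k) * ((D * ρ) * (1 + D * ρ) ^ (k - 1)) := by ring
        _ ≤ (C * (M 1 * σ) ^ k) * ((1 + D * ρ) * (1 + D * ρ) ^ k) := by
            apply mul_le_mul_of_nonneg_left _ (mul_nonneg hC.le hMσ)
            exact mul_le_mul h1' h2' (pow_nonneg hb _) hb
        _ = (C * (1 + D * ρ)) * (M 1 * σ * (1 + D * ρ)) ^ k := by
            rw [mul_pow (M 1 * σ)]
            ring
    calc C * D * ρ * (M 1 * σ) ^ k * (1 + D * ρ) ^ (k - 1) * k.factorial * M k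
        = (C * D * ρ * (M 1 * σ) ^ k * (1 + D * ρ) ^ (k - 1)) * (k.factorial * M k) := by ring
      _ ≤ ((C * (1 + D * ρ)) * (M 1 * σ * (1 + D * ρ)) ^ k) * (k.factorial * M k) :=
          mul_le_mul_of_nonneg_right hkey (mul_nonneg (Nat.cast_nonneg _) (hpos k).le)
      _ = C * (1 + D * ρ) * (M 1 * σ * (1 + D * ρ)) ^ k * k.factorial * M k := by ring
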